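/- There exists a partial order ≤_P on ℕ whose coded set is c.e. and which is not isomorphic to any partial order on ℕ whose coded set is co-c.e. -/

import Mathlib

/-!
Let `K` be the halting set. Each `x : ℕ` codes the pair `⟨m, i⟩ = x.unpair`, and the order `P`
is the lexicographic order on these pairs in which some pairs of block `m` are made incomparable:
on `⟨m, 0⟩, …, ⟨m, m + 5⟩` the incomparability graph is a path closed off by a triangle at the
top and, exactly when `m ∉ K`, by a triangle at the bottom. As `K` is c.e., so is `P`.

The dumbbell with a path of length `n + 1` between its two triangles embeds, as a subgraph, in
the incomparability graph of `P` only inside block `n`, and only if that block has both triangles: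
the two triangles must land on the two triangles of one block `m`, the path joining them advances
by at most one vertex per step, so `m ≤ n`, and injectivity gives `n ≤ m`. If `Q ≅ P` were
co-c.e., incomparability in `Q` would be c.e., so searching `Q` for such copies would enumerate
the complement of `K`.
-/

namespace CEOrders

/-- The coded set of a binary relation on ℕ, via the pairing function `Nat.pair`. -/
def codedSet (R : ℕ → ℕ → Prop) : Set ℕ := {n | R n.unpair.1 n.unpair.2}

/-- A set of naturals is c.e. (computably enumerable). -/
def SetCE (A : Set ℕ) : Prop := REPred (· ∈ A)

/-- A set of naturals is co-c.e. -/
def SetCoCE (A : Set ℕ) : Prop := REPred (· ∉ A)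

/-- A set of naturals is computable. -/
def SetComputable (A : Set ℕ) : Prop := ComputablePred (· ∈ A)

/-- A partial order on ℕ: reflexive, antisymmetric, transitive. -/
def PartialOrderRel (R : ℕ → ℕ → Prop) : Prop :=
  (∀ a, R a a) ∧ (∀ a b, R a b → R b a → a = b) ∧ (∀ a b c, R a b → R b c → R a c)

/-- A preorder on ℕ: reflexive, transitive. -/
def PreorderRel (R : ℕ → ℕ → Prop) : Prop :=
  (∀ a, R a a) ∧ (∀ a b c, R a b → R b c → R a c)

/-- A (simple, undirected) graph on ℕ: irreflexive, symmetric. -/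
def GraphRel (R : ℕ → ℕ → Prop) : Prop :=
  (∀ a, ¬ R a a) ∧ (∀ a b, R a b → R b a)

/-- Isomorphism of binary relations on ℕ. -/
def Isomorphic (R Q : ℕ → ℕ → Prop) : Prop :=
  ∃ f : ℕ → ℕ, Function.Bijective f ∧ ∀ a b, R a b ↔ Q (f a) (f b)

/-- A chain for a relation: any two elements comparable. -/
def ChainFor (R : ℕ → ℕ → Prop) (C : Set ℕ) : Prop :=
  ∀ a ∈ C, ∀ b ∈ C, R a b ∨ R b a

/-- An antichain for a relation: any two distinct elements incomparable. -/
def AntichainFor (R : ℕ → ℕ → Prop) (C : Set ℕ) : Prop :=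
  ∀ a ∈ C, ∀ b ∈ C, a ≠ b → ¬ R a b ∧ ¬ R b a

/-- Partial functions computable relative to an oracle `g`. -/
inductive RecursiveIn (g : ℕ →. ℕ) : (ℕ →. ℕ) → Prop
  | zero : RecursiveIn g (pure 0)
  | succ : RecursiveIn g Nat.succ
  | left : RecursiveIn g ↑fun n : ℕ => n.unpair.1
  | right : RecursiveIn g ↑fun n : ℕ => n.unpair.2
  | oracle : RecursiveIn g g
  | pair {f h} : RecursiveIn g f → RecursiveIn g h →
      RecursiveIn g fun n => Nat.pair <$> f n <*> h n
  | comp {f h} : RecursiveIn g f → RecursiveIn g h →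
      RecursiveIn g fun n => h n >>= f
  | prec {f h} : RecursiveIn g f → RecursiveIn g h →
      RecursiveIn g (Nat.unpaired fun a n =>
        n.rec (f a) fun y IH => do let i ← IH; h (Nat.pair a (Nat.pair y i)))
  | rfind {f} : RecursiveIn g f →
      RecursiveIn g fun a => Nat.rfind fun n => (fun m => m = 0) <$> f (Nat.pair a n)

open Classical in
/-- The characteristic (partial) function of a set of naturals. -/
noncomputable def charFun (A : Set ℕ) : ℕ →. ℕ :=
  fun n => Part.some (if n ∈ A then 1 else 0)

/-- Turing reducibility between sets of naturals. -/
def TuringLE (A B : Set ℕ) : Prop := RecursiveIn (charFun B) (charFun A)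

/-- Turing equivalence between sets of naturals. -/
def TuringEquiv (A B : Set ℕ) : Prop := TuringLE A B ∧ TuringLE B A

/-- The halting set ∅'. -/
def HaltingSet : Set ℕ :=
  {n | ((Denumerable.ofNat Nat.Partrec.Code n).eval n).Dom}

/-- A relation on ℕ is automorphically nontrivial. -/
def AutNontrivial (R : ℕ → ℕ → Prop) : Prop :=
  ¬ ∃ F : Finset ℕ, ∀ f : ℕ → ℕ, Function.Bijective f → (∀ x ∈ F, f x = x) →
      ∀ a b, R a b ↔ R (f a) (f b)

end CEOrders

open Encodable Function Relation Set Nat.Partrec.Code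
open Nat.Partrec (Code)

section REPred

variable {α β : Type*} [Primcodable α] [Primcodable β]

theorem REPred.exists_monotone_primrecRel {p : α → Prop} (hp : REPred p) :
    ∃ R : α → ℕ → Prop, PrimrecRel R ∧ (∀ a, Monotone (R a)) ∧ ∀ a, p a ↔ ∃ s, R a s := by
  obtain ⟨c, hc⟩ := exists_code.1 hp
  refine ⟨fun a s => (evaln s c (encode a)).isSome, ?_, fun a s t hst h => ?_, fun a => ?_⟩
  · refine Primrec₂.primrecRel ((Primrec.option_isSome.comp (primrec_evaln.comp
      ((Primrec.snd.pair (Primrec.const c)).pair (Primrec.encode.comp Primrec.fst)))).of_eq ?_)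
    simp
  · obtain ⟨x, hx⟩ := Option.isSome_iff_exists.1 h
    exact Option.isSome_iff_exists.2 ⟨x, evaln_mono hst hx⟩
  · have : (eval c (encode a)).Dom ↔ p a := by simp [hc, Part.assert]
    rw [← this, Part.dom_iff_mem]
    simp only [evaln_complete, Option.isSome_iff_exists]
    exact ⟨fun ⟨x, k, hk⟩ => ⟨k, x, hk⟩, fun ⟨k, x, hk⟩ => ⟨x, k, hk⟩⟩

theorem PrimrecRel.rePred_exists {R : α → ℕ → Prop} (hR : PrimrecRel R) :
    REPred fun a => ∃ s, R a s := by
  classical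
  refine (Partrec.rfind hR.decide.to_comp.partrec₂).dom_re.of_eq fun a => ?_
  simp [Nat.rfind_dom]

theorem REPred.comp {p : β → Prop} (hp : REPred p) {f : α → β} (hf : Computable f) :
    REPred fun a => p (f a) :=
  Partrec.comp hp hf

theorem REPred.or {p q : α → Prop} (hp : REPred p) (hq : REPred q) :
    REPred fun a => p a ∨ q a := by
  obtain ⟨R, hR, -, hpR⟩ := hp.exists_monotone_primrecRel
  obtain ⟨R', hR', -, hqR'⟩ := hq.exists_monotone_primrecRel
  exact (PrimrecRel.rePred_exists (R := fun a s => R a s ∨ R' a s) (hR.or hR')).of_eq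
    fun a => by rw [hpR, hqR', exists_or]

theorem REPred.and {p q : α → Prop} (hp : REPred p) (hq : REPred q) :
    REPred fun a => p a ∧ q a := by
  obtain ⟨R, hR, hRmono, hpR⟩ := hp.exists_monotone_primrecRel
  obtain ⟨R', hR', hR'mono, hqR'⟩ := hq.exists_monotone_primrecRel
  refine (PrimrecRel.rePred_exists (R := fun a s => R a s ∧ R' a s) (hR.and hR')).of_eq
    fun a => ?_
  rw [hpR, hqR']
  exact ⟨fun ⟨s, hs, hs'⟩ => ⟨⟨s, hs⟩, s, hs'⟩, fun ⟨⟨s, hs⟩, s', hs'⟩ =>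
    ⟨max s s', hRmono a (le_max_left s s') hs, hR'mono a (le_max_right s s') hs'⟩⟩

theorem REPred.exists {p : α × ℕ → Prop} (hp : REPred p) : REPred fun a => ∃ b, p (a, b) := by
  obtain ⟨R, hR, -, hpR⟩ := hp.exists_monotone_primrecRel
  refine (PrimrecRel.rePred_exists (hR.comp₂ (Primrec₂.pair.comp₂ Primrec₂.left
    (Primrec.fst.comp (Primrec.unpair.comp Primrec.snd)).to₂)
    (Primrec.snd.comp (Primrec.unpair.comp Primrec.snd)).to₂)).of_eq fun a => ?_
  simp only [hpR]
  exact ⟨fun ⟨w, hw⟩ => ⟨w.unpair.1, w.unpair.2, hw⟩,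
    fun ⟨b, s, hs⟩ => ⟨Nat.pair b s, by simpa using hs⟩⟩

theorem REPred.forall_lt {r : α × ℕ → Prop} (hr : REPred r) {f : α → ℕ} (hf : Primrec f) :
    REPred fun a => ∀ k < f a, r (a, k) := by
  obtain ⟨R, hR, hRmono, hrR⟩ := hr.exists_monotone_primrecRel
  have hR' : PrimrecRel fun a s => ∀ k < f a, R (a, k) s :=
    ((PrimrecRel.forall_mem_list (R := fun k (x : α × ℕ) => R (x.1, k) x.2) (hR.comp₂
      (Primrec₂.pair.comp₂ (Primrec.fst.comp Primrec.snd).to₂ Primrec₂.left)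
      (Primrec.snd.comp Primrec.snd).to₂)).comp (Primrec.list_range.comp (hf.comp Primrec.fst))
      Primrec.id).of_eq fun x => by simp
  refine (PrimrecRel.rePred_exists hR').of_eq
    fun a => ⟨fun ⟨s, hs⟩ k hk => (hrR (a, k)).2 ⟨s, hs k hk⟩, fun h => ?_⟩
  have : ∀ᶠ s in Filter.atTop, ∀ k ∈ Iio (f a), R (a, k) s :=
    (Filter.eventually_all_finite (finite_Iio _)).2 fun k hk =>
      let ⟨s, hs⟩ := (hrR (a, k)).1 (h k hk)
      Filter.eventually_atTop.2 ⟨s, fun t ht => hRmono _ ht hs⟩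
  exact this.exists

end REPred

namespace CEOrders

theorem rePred_mem_haltingSet : REPred (· ∈ HaltingSet) :=
  (eval_part.comp (Computable.ofNat Code) Computable.id).dom_re

theorem not_rePred_notMem_haltingSet : ¬ REPred (· ∉ HaltingSet) := fun h =>
  ComputablePred.halting_problem_not_re 0 <|
    (h.comp (Primrec.encode.comp (primrec₂_comp.comp Primrec.id
      (Primrec.const (Code.const 0)))).to_comp).of_eq fun c => by
    simp only [HaltingSet, mem_ofPred_eq, Denumerable.ofNat_encode]
    exact not_congr (Iff.of_eq (congrArg Part.Dom (Part.bind_some 0 c.eval)))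

section LeExcept

variable {α : Type*} [LinearOrder α] {E : α → α → Prop} {a b c : α}

def LeExcept (E : α → α → Prop) (a b : α) : Prop := a = b ∨ (a < b ∧ ¬ E a b)

theorem LeExcept.antisymm (hab : LeExcept E a b) (hba : LeExcept E b a) : a = b := by
  rcases hab with rfl | ⟨hab, -⟩
  · rfl
  rcases hba with rfl | ⟨hba, -⟩
  · rfl
  exact absurd hab hba.not_gt

theorem LeExcept.trans (hE : ∀ a b c, a < b → b < c → E a c → E a b ∨ E b c)
    (hab : LeExcept E a b) (hbc : LeExcept E b c) : LeExcept E a c := by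
  rcases hab with rfl | ⟨hab, hEab⟩
  · exact hbc
  rcases hbc with rfl | ⟨hbc, hEbc⟩
  · exact Or.inr ⟨hab, hEab⟩
  exact Or.inr ⟨hab.trans hbc, fun hEac => (hE a b c hab hbc hEac).elim hEab hEbc⟩

theorem incompRel_leExcept_iff (hE : ∀ a b, E a b → a < b) :
    IncompRel (LeExcept E) a b ↔ SymmGen E a b := by
  unfold IncompRel LeExcept SymmGen
  rcases lt_trichotomy a b with h | rfl | h
  · have := h.ne; have := h.not_gt; have := fun h' => (hE b a h').not_gt h
    tauto
  · have := fun h' => (hE a a h').ne rfl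
    tauto
  · have := h.ne; have := h.not_gt; have := fun h' => (hE a b h').not_gt h
    tauto

theorem partialOrderRel_leExcept_comp (hE : ∀ a b c, a < b → b < c → E a c → E a b ∨ E b c)
    {f : ℕ → α} (hf : Injective f) : PartialOrderRel fun x y => LeExcept E (f x) (f y) :=
  ⟨fun _ => Or.inl rfl, fun _ _ hxy hyx => hf (hxy.antisymm hyx),
    fun _ _ _ hxy hyz => hxy.trans hE hyz⟩

end LeExcept

section Dumbbell

/- Edges `i < j` of graphs on `0, …, n + 5`. The lollipop is the path `0 — 1 — ⋯ — n + 5` with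
the triangle `n + 3, n + 4, n + 5`; the dumbbell adds the chord `0 — 2`, closing a second
triangle, when `c` holds. -/

def Lollipop (n i j : ℕ) : Prop := (j = i + 1 ∧ j ≤ n + 5) ∨ (i = n + 3 ∧ j = n + 5)

def Dumbbell (c : Prop) (n i j : ℕ) : Prop := Lollipop n i j ∨ (c ∧ i = 0 ∧ j = 2)

def IsDumbbellCopy (G : ℕ → ℕ → Prop) (n : ℕ) (φ : ℕ → ℕ) : Prop :=
  InjOn φ (Iic (n + 5)) ∧ ∀ i j, Dumbbell True n i j → G (φ i) (φ j)

variable {c : Prop} {n m a b d : ℕ} {G : ℕ → ℕ → Prop} {φ : ℕ → ℕ}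

theorem Dumbbell.lt_and_le (h : Dumbbell c n a b) : a < b ∧ b ≤ n + 5 := by
  unfold Dumbbell Lollipop at h
  omega

theorem symmGen_dumbbell_le (h : SymmGen (Dumbbell c m) a b) : a ≤ m + 5 ∧ b ≤ m + 5 := by
  rcases h with h | h <;> have := h.lt_and_le <;> omega

theorem symmGen_dumbbell_triangle (hab : SymmGen (Dumbbell c m) a b)
    (hbd : SymmGen (Dumbbell c m) b d) (had : SymmGen (Dumbbell c m) a d) :
    (c ∧ a ≤ 2 ∧ b ≤ 2 ∧ d ≤ 2) ∨ (m + 3 ≤ a ∧ m + 3 ≤ b ∧ m + 3 ≤ d) := by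
  unfold SymmGen Dumbbell Lollipop at *
  by_cases hc : c <;> simp only [hc, true_and, false_and, or_false] at * <;> omega

theorem symmGen_dumbbell_step (h : SymmGen (Dumbbell c m) a b) :
    (a ≤ b + 1 ∧ b ≤ a + 1) ∨ (a ≤ 2 ∧ b ≤ 2) ∨ (m + 3 ≤ a ∧ m + 3 ≤ b) := by
  unfold SymmGen Dumbbell Lollipop at h
  omega

theorem isDumbbellCopy_iff_forall_lt : IsDumbbellCopy G n φ ↔
    ∀ j < n + 6, ∀ i < j, φ i ≠ φ j ∧ (Dumbbell True n i j → G (φ i) (φ j)) := by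
  refine ⟨fun h j hj i hij => ⟨h.1.ne (by simp; omega) (by simp; omega) hij.ne, h.2 i j⟩,
    fun h => ⟨fun i hi j hj hφ => ?_, fun i j hij => ?_⟩⟩
  · simp only [mem_Iic] at hi hj
    rcases lt_trichotomy i j with hij | rfl | hij
    · exact absurd hφ (h j (by omega) i hij).1
    · rfl
    · exact absurd hφ.symm (h i (by omega) j hij).1
  · have := hij.lt_and_le
    exact (h j (by omega) i this.1).2 hij

theorem IsDumbbellCopy.path (h : IsDumbbellCopy G n φ) (k : ℕ) (hk : k < n + 5) :
    G (φ k) (φ (k + 1)) :=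
  h.2 _ _ (Or.inl (Or.inl ⟨rfl, hk⟩))

theorem IsDumbbellCopy.map {G' : ℕ → ℕ → Prop} {f : ℕ → ℕ} (h : IsDumbbellCopy G n φ)
    (hf : Injective f) (hGG' : ∀ a b, G a b → G' (f a) (f b)) : IsDumbbellCopy G' n (f ∘ φ) :=
  ⟨hf.comp_injOn h.1, fun i j hij => hGG' _ _ (h.2 i j hij)⟩

theorem IsDumbbellCopy.mem_Icc_of_mapsTo (h : IsDumbbellCopy G n φ) {t r k : ℕ}
    (hmaps : MapsTo φ (Icc t (t + 2)) (Icc r (r + 2))) (ht : t + 2 ≤ n + 5) (hk : k ≤ n + 5)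
    (hφk : φ k ∈ Icc r (r + 2)) : k ∈ Icc t (t + 2) := by
  have hsub : Icc t (t + 2) ⊆ Iic (n + 5) := fun x hx => by
    simp only [mem_Icc, mem_Iic] at *
    omega
  obtain ⟨x, hx, hφx⟩ := Finset.surjOn_of_injOn_of_card_le φ
    (s := Finset.Icc t (t + 2)) (t := Finset.Icc r (r + 2)) (by simpa using hmaps)
    (by simpa using h.1.mono hsub) (by simp only [Nat.card_Icc]; omega) (by simpa using hφk)
  rw [Finset.coe_Icc] at hx
  rwa [h.1 (by simpa using hk) (hsub hx) hφx.symm]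

theorem IsDumbbellCopy.apply_le (h : IsDumbbellCopy (SymmGen (Dumbbell c m)) n φ) {k : ℕ}
    (hk : k ≤ n + 5) : φ k ≤ m + 5 := by
  rcases Nat.lt_or_ge k (n + 5) with hk' | hk'
  · exact (symmGen_dumbbell_le (h.path k hk')).1
  · obtain rfl : k = n + 4 + 1 := by omega
    exact (symmGen_dumbbell_le (h.path (n + 4) (by omega))).2

theorem IsDumbbellCopy.le (h : IsDumbbellCopy (SymmGen (Dumbbell c m)) n φ) : n ≤ m := by
  have := Finset.card_le_card_of_injOn φ (s := Finset.Iic (n + 5)) (t := Finset.Iic (m + 5))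
    (fun k hk => by simpa using h.apply_le (by simpa using hk)) (by simpa using h.1)
  simpa using this

theorem IsDumbbellCopy.mapsTo_triangle (h : IsDumbbellCopy (SymmGen (Dumbbell c m)) n φ)
    {t : ℕ} (ht : t = 0 ∨ t = n + 3) :
    (c ∧ MapsTo φ (Icc t (t + 2)) (Icc 0 2)) ∨
      MapsTo φ (Icc t (t + 2)) (Icc (m + 3) (m + 5)) := by
  have h02 : SymmGen (Dumbbell c m) (φ t) (φ (t + 2)) := h.2 _ _ <| by
    rcases ht with rfl | rfl
    · exact Or.inr ⟨trivial, rfl, rfl⟩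
    · exact Or.inl (Or.inr ⟨rfl, rfl⟩)
  have h12 : SymmGen (Dumbbell c m) (φ (t + 1)) (φ (t + 2)) := h.path (t + 1) (by omega)
  have := h.apply_le (k := t) (by omega)
  have := h.apply_le (k := t + 1) (by omega)
  have := h.apply_le (k := t + 2) (by omega)
  have hIcc : ∀ {k}, k ∈ Icc t (t + 2) → k = t ∨ k = t + 1 ∨ k = t + 2 := fun hk => by
    simp only [mem_Icc] at hk
    omega
  rcases symmGen_dumbbell_triangle (h.path t (by omega)) h12 h02 with ⟨hc, h⟩ | h
  · exact Or.inl ⟨hc, fun k hk => by rcases hIcc hk with rfl | rfl | rfl <;> simp <;> omega⟩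
  · exact Or.inr fun k hk => by rcases hIcc hk with rfl | rfl | rfl <;> simp <;> omega

theorem IsDumbbellCopy.exists_mapsTo_triangles
    (h : IsDumbbellCopy (SymmGen (Dumbbell c m)) n φ) :
    ∃ tL tH, (tL = 0 ∧ tH = n + 3 ∨ tL = n + 3 ∧ tH = 0) ∧
      MapsTo φ (Icc tL (tL + 2)) (Icc 0 2) ∧
      MapsTo φ (Icc tH (tH + 2)) (Icc (m + 3) (m + 5)) ∧ c := by
  have h3 : n + 3 ∈ Icc (n + 3) (n + 3 + 2) := by simp
  rcases h.mapsTo_triangle (t := 0) (Or.inl rfl) with ⟨hc, h0⟩ | h0 <;>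
    rcases h.mapsTo_triangle (t := n + 3) (Or.inr rfl) with ⟨hc, hn⟩ | hn
  · have := h.mem_Icc_of_mapsTo h0 (by omega) (by omega) (hn h3)
    simp at this
  · exact ⟨0, n + 3, Or.inl ⟨rfl, rfl⟩, h0, hn, hc⟩
  · exact ⟨n + 3, 0, Or.inr ⟨rfl, rfl⟩, hn, h0, hc⟩
  · have := h.mem_Icc_of_mapsTo h0 (by omega) (by omega) (hn h3)
    simp at this

theorem IsDumbbellCopy.eq_and (h : IsDumbbellCopy (SymmGen (Dumbbell c m)) n φ) :
    n = m ∧ c := by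
  obtain ⟨tL, tH, htLH, hL, hH, hc⟩ := h.exists_mapsTo_triangles
  -- Both windows are filled by the images of the triangles, so the path `2 — ⋯ — n + 3`
  -- uses no chord of the host and moves by at most one per step.
  have hstep : ∀ k, 2 ≤ k → k < n + 3 → φ k ≤ φ (k + 1) + 1 ∧ φ (k + 1) ≤ φ k + 1 := by
    intro k hk2 hk3
    have hsplit : ∀ {t r}, MapsTo φ (Icc t (t + 2)) (Icc r (r + 2)) → (t = 0 ∨ t = n + 3) →
        φ k ∈ Icc r (r + 2) → φ (k + 1) ∈ Icc r (r + 2) → False := fun hmaps ht hk hk' => by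
      have := h.mem_Icc_of_mapsTo hmaps (by omega) (by omega) hk
      have := h.mem_Icc_of_mapsTo hmaps (by omega) (by omega) hk'
      simp only [mem_Icc] at *
      omega
    have := h.apply_le (k := k) (by omega)
    have := h.apply_le (k := k + 1) (by omega)
    rcases symmGen_dumbbell_step (h.path k (by omega)) with hk | ⟨h1, h2⟩ | ⟨h1, h2⟩
    · exact hk
    · exact (hsplit hL (by omega) ⟨by omega, h1⟩ ⟨by omega, h2⟩).elim
    · exact (hsplit hH (by omega) ⟨h1, by omega⟩ ⟨h2, by omega⟩).elim
  have hlip : ∀ j ≤ n + 1, φ (2 + j) ≤ φ 2 + j ∧ φ 2 ≤ φ (2 + j) + j := by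
    intro j hj
    induction j with
    | zero => simp
    | succ j ih =>
      have := ih (by omega)
      have := hstep (2 + j) (by omega) (by omega)
      rw [← add_assoc]
      omega
  have hend := hlip (n + 1) le_rfl
  rw [show 2 + (n + 1) = n + 3 by omega] at hend
  have h2 : 2 ∈ Icc 0 (0 + 2) := by simp
  have h3 : n + 3 ∈ Icc (n + 3) (n + 3 + 2) := by simp
  have := h.le
  refine ⟨?_, hc⟩
  rcases htLH with ⟨rfl, rfl⟩ | ⟨rfl, rfl⟩
  · have := hL h2; have := hH h3; simp only [mem_Icc] at *; omega
  · have := hL h3; have := hH h2; simp only [mem_Icc] at *; omega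

theorem primrecPred_lollipop : PrimrecPred fun x : ℕ × ℕ × ℕ => Lollipop x.1 x.2.1 x.2.2 := by
  have hi : Primrec fun x : ℕ × ℕ × ℕ => x.2.1 := Primrec.fst.comp Primrec.snd
  have hj : Primrec fun x : ℕ × ℕ × ℕ => x.2.2 := Primrec.snd.comp Primrec.snd
  have hn (k : ℕ) : Primrec fun x : ℕ × ℕ × ℕ => x.1 + k :=
    Primrec.nat_add.comp Primrec.fst (Primrec.const k)
  exact ((Primrec.eq.comp hj (Primrec.nat_add.comp hi (Primrec.const 1))).and
    (Primrec.nat_le.comp hj (hn 5))).or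
    ((Primrec.eq.comp hi (hn 3)).and (Primrec.eq.comp hj (hn 5)))

theorem rePred_exists_isDumbbellCopy (hG : REPred fun p : ℕ × ℕ => G p.1 p.2) :
    REPred fun n => ∃ φ, IsDumbbellCopy G n φ := by
  -- A copy is searched for as the list `w` of its values at `0, …, n + 5`;
  -- the checks are indexed by `z = (((n, w), j), i)`.
  let dec (w k : ℕ) : ℕ := (Denumerable.ofNat (List ℕ) w).getD k 0
  have hdec : Primrec₂ dec :=
    (Primrec.list_getD 0).comp ((Primrec.ofNat _).comp Primrec.fst) Primrec.snd
  have hn : Primrec fun z : ((ℕ × ℕ) × ℕ) × ℕ => z.1.1.1 :=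
    Primrec.fst.comp (Primrec.fst.comp Primrec.fst)
  have hw : Primrec fun z : ((ℕ × ℕ) × ℕ) × ℕ => z.1.1.2 :=
    Primrec.snd.comp (Primrec.fst.comp Primrec.fst)
  have hj : Primrec fun z : ((ℕ × ℕ) × ℕ) × ℕ => z.1.2 := Primrec.snd.comp Primrec.fst
  have hi : Primrec fun z : ((ℕ × ℕ) × ℕ) × ℕ => z.2 := Primrec.snd
  have hdumbbell : PrimrecPred fun z : ((ℕ × ℕ) × ℕ) × ℕ => ¬Dumbbell True z.1.1.1 z.2 z.1.2 :=
    ((primrecPred_lollipop.comp (hn.pair (hi.pair hj))).or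
      ((Primrec.eq.comp hi (Primrec.const 0)).and (Primrec.eq.comp hj (Primrec.const 2)))).not.of_eq
      fun z => by simp [Dumbbell]
  have hcheck : REPred fun z : ((ℕ × ℕ) × ℕ) × ℕ =>
      dec z.1.1.2 z.2 ≠ dec z.1.1.2 z.1.2 ∧
        (Dumbbell True z.1.1.1 z.2 z.1.2 → G (dec z.1.1.2 z.2) (dec z.1.1.2 z.1.2)) :=
    ((Primrec.eq.comp (hdec.comp hw hi) (hdec.comp hw hj)).not.computablePred.to_re.and
      (hdumbbell.computablePred.to_re.or
        (hG.comp ((hdec.comp hw hi).pair (hdec.comp hw hj)).to_comp))).of_eq fun _ =>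
      and_congr_right fun _ => imp_iff_not_or.symm
  refine (REPred.exists ((hcheck.forall_lt Primrec.snd).forall_lt
    (Primrec.nat_add.comp Primrec.fst (Primrec.const 6)))).of_eq fun n => ?_
  simp only [isDumbbellCopy_iff_forall_lt]
  refine ⟨fun ⟨w, hw⟩ => ⟨dec w, hw⟩, fun ⟨φ, hφ⟩ => ⟨encode ((List.range (n + 6)).map φ), ?_⟩⟩
  intro j hj i hij
  simpa [dec, hj, hij.trans hj] using hφ j hj i hij

end Dumbbell

section BlockOrder

variable {K : Set ℕ} {n : ℕ} {ψ : ℕ → ℕ}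

def blockEdge (K : Set ℕ) (a b : ℕ ×ₗ ℕ) : Prop :=
  (ofLex a).1 = (ofLex b).1 ∧ Dumbbell ((ofLex a).1 ∉ K) (ofLex a).1 (ofLex a).2 (ofLex b).2

def blockOrder (K : Set ℕ) (x y : ℕ) : Prop :=
  LeExcept (blockEdge K) (toLex x.unpair) (toLex y.unpair)

theorem blockEdge_lt {a b : ℕ ×ₗ ℕ} (h : blockEdge K a b) : a < b :=
  Prod.Lex.toLex_lt_toLex.2 (Or.inr ⟨h.1, h.2.lt_and_le.1⟩)

theorem blockEdge_convex (a b d : ℕ ×ₗ ℕ) (hab : a < b) (hbd : b < d)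
    (had : blockEdge K a d) : blockEdge K a b ∨ blockEdge K b d := by
  obtain ⟨⟨m, i⟩, rfl⟩ := toLex.surjective a
  obtain ⟨⟨m', k⟩, rfl⟩ := toLex.surjective b
  obtain ⟨⟨m'', j⟩, rfl⟩ := toLex.surjective d
  simp only [blockEdge, ofLex_toLex, Prod.Lex.toLex_lt_toLex] at *
  obtain ⟨rfl, had⟩ := had
  obtain rfl : m' = m := by omega
  unfold Dumbbell Lollipop at *
  omega

theorem partialOrderRel_blockOrder (K : Set ℕ) : PartialOrderRel (blockOrder K) :=
  partialOrderRel_leExcept_comp blockEdge_convex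
    (toLex.injective.comp Nat.pairEquiv.symm.injective)

theorem incompRel_blockOrder_iff {x y : ℕ} : IncompRel (blockOrder K) x y ↔
    x.unpair.1 = y.unpair.1 ∧
      SymmGen (Dumbbell (x.unpair.1 ∉ K) x.unpair.1) x.unpair.2 y.unpair.2 := by
  change IncompRel (LeExcept (blockEdge K)) (toLex x.unpair) (toLex y.unpair) ↔ _
  rw [incompRel_leExcept_iff fun _ _ => blockEdge_lt]
  simp only [SymmGen, blockEdge, ofLex_toLex]
  constructor
  · rintro (⟨h, hd⟩ | ⟨h, hd⟩)
    · exact ⟨h, Or.inl hd⟩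
    · exact ⟨h.symm, Or.inr (h ▸ hd)⟩
  · rintro ⟨h, hd | hd⟩
    · exact Or.inl ⟨h, hd⟩
    · exact Or.inr ⟨h.symm, h ▸ hd⟩

theorem leExcept_blockEdge_iff {a b : ℕ × ℕ} : LeExcept (blockEdge K) (toLex a) (toLex b) ↔
    a = b ∨ ((a.1 < b.1 ∨ a.1 = b.1 ∧ a.2 < b.2) ∧ ¬(a.1 = b.1 ∧ Lollipop a.1 a.2 b.2)) ∧
      (¬(a.1 = b.1 ∧ a.2 = 0 ∧ b.2 = 2) ∨ a.1 ∈ K) := by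
  simp only [LeExcept, blockEdge, Dumbbell, Prod.Lex.toLex_lt_toLex, ofLex_toLex,
    EmbeddingLike.apply_eq_iff_eq]
  have key : ∀ E lt A L k Z : Prop,
      (E ∨ lt ∧ ¬(A ∧ (L ∨ ¬k ∧ Z))) ↔ (E ∨ (lt ∧ ¬(A ∧ L)) ∧ (¬(A ∧ Z) ∨ k)) := by
    intros
    tauto
  exact key _ _ _ _ _ _

theorem setCE_codedSet_blockOrder (hK : REPred (· ∈ K)) : SetCE (codedSet (blockOrder K)) := by
  have h11 : Primrec fun q : (ℕ × ℕ) × (ℕ × ℕ) => q.1.1 := Primrec.fst.comp Primrec.fst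
  have h12 : Primrec fun q : (ℕ × ℕ) × (ℕ × ℕ) => q.1.2 := Primrec.snd.comp Primrec.fst
  have h21 : Primrec fun q : (ℕ × ℕ) × (ℕ × ℕ) => q.2.1 := Primrec.fst.comp Primrec.snd
  have h22 : Primrec fun q : (ℕ × ℕ) × (ℕ × ℕ) => q.2.2 := Primrec.snd.comp Primrec.snd
  have hsame : PrimrecPred fun q : (ℕ × ℕ) × (ℕ × ℕ) => q.1.1 = q.2.1 :=
    Primrec.eq.comp h11 h21
  have hlt : PrimrecPred fun q : (ℕ × ℕ) × (ℕ × ℕ) =>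
      (q.1.1 < q.2.1 ∨ q.1.1 = q.2.1 ∧ q.1.2 < q.2.2) ∧
        ¬(q.1.1 = q.2.1 ∧ Lollipop q.1.1 q.1.2 q.2.2) :=
    ((Primrec.nat_lt.comp h11 h21).or (hsame.and (Primrec.nat_lt.comp h12 h22))).and
      (hsame.and (primrecPred_lollipop.comp (h11.pair (h12.pair h22)))).not
  have hchord : PrimrecPred fun q : (ℕ × ℕ) × (ℕ × ℕ) =>
      ¬(q.1.1 = q.2.1 ∧ q.1.2 = 0 ∧ q.2.2 = 2) :=
    (hsame.and ((Primrec.eq.comp h12 (Primrec.const 0)).and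
      (Primrec.eq.comp h22 (Primrec.const 2)))).not
  have hunpair : Computable fun z : ℕ => (z.unpair.1.unpair, z.unpair.2.unpair) :=
    ((Primrec.unpair.comp (Primrec.fst.comp Primrec.unpair)).pair
      (Primrec.unpair.comp (Primrec.snd.comp Primrec.unpair))).to_comp
  exact (((Primrec.eq.comp Primrec.fst Primrec.snd).computablePred.to_re.or
    (hlt.computablePred.to_re.and (hchord.computablePred.to_re.or
      (hK.comp h11.to_comp)))).comp hunpair).of_eq fun _ => leExcept_blockEdge_iff.symm

theorem isDumbbellCopy_pair (hn : n ∉ K) :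
    IsDumbbellCopy (IncompRel (blockOrder K)) n (Nat.pair n) :=
  ⟨fun _ _ _ _ h => (Nat.pair_eq_pair.1 h).2, fun i j hij => incompRel_blockOrder_iff.2
    ⟨by simp, Or.inl (by
      simp only [Nat.unpair_pair]
      exact hij.imp_right fun ⟨_, h⟩ => ⟨hn, h⟩)⟩⟩

theorem IsDumbbellCopy.notMem (h : IsDumbbellCopy (IncompRel (blockOrder K)) n ψ) : n ∉ K := by
  set m := (ψ 0).unpair.1
  have hblock : ∀ k ≤ n + 5, (ψ k).unpair.1 = m := by
    intro k hk
    induction k with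
    | zero => rfl
    | succ k ih =>
      rw [← ih (by omega)]
      exact (incompRel_blockOrder_iff.1 (h.path k (by omega))).1.symm
  have hcopy : IsDumbbellCopy (SymmGen (Dumbbell (m ∉ K) m)) n fun k => (ψ k).unpair.2 := by
    refine ⟨fun i hi j hj hij => h.1 hi hj ?_, fun i j hij => ?_⟩
    · rw [← Nat.pair_unpair (ψ i), ← Nat.pair_unpair (ψ j), hblock i hi, hblock j hj]
      exact congrArg _ hij
    · have := incompRel_blockOrder_iff.1 (h.2 i j hij)
      rw [hblock i (by have := hij.lt_and_le; omega)] at this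
      exact this.2
  obtain ⟨rfl, hn⟩ := hcopy.eq_and
  exact hn

theorem rePred_notMem_of_isomorphic_blockOrder {Q : ℕ → ℕ → Prop}
    (hPQ : Isomorphic (blockOrder K) Q) (hQ : SetCoCE (codedSet Q)) : REPred (· ∉ K) := by
  obtain ⟨f, hf, hfPQ⟩ := hPQ
  have hQincomp : REPred fun p : ℕ × ℕ => IncompRel Q p.1 p.2 :=
    ((hQ.comp Primrec₂.natPair.to_comp).and
      (hQ.comp (Primrec₂.natPair.comp Primrec.snd Primrec.fst).to_comp)).of_eq fun p => by
      simp [codedSet, IncompRel]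
  refine (rePred_exists_isDumbbellCopy hQincomp).of_eq fun n =>
    ⟨fun ⟨ψ, hψ⟩ => (hψ.map (injective_surjInv hf.2) fun a b hab => ?_).notMem,
      fun hn => ⟨_, (isDumbbellCopy_pair hn).map hf.1 fun a b hab => ?_⟩⟩
  · simpa only [IncompRel, hfPQ, surjInv_eq hf.2] using hab
  · simpa only [IncompRel, hfPQ] using hab

end BlockOrder

theorem exists_CE_partialOrder_not_iso_coCE :
    ∃ P : ℕ → ℕ → Prop, PartialOrderRel P ∧ SetCE (codedSet P) ∧
      ∀ Q : ℕ → ℕ → Prop, PartialOrderRel Q → SetCoCE (codedSet Q) → ¬ Isomorphic P Q :=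
  ⟨blockOrder HaltingSet, partialOrderRel_blockOrder HaltingSet,
    setCE_codedSet_blockOrder rePred_mem_haltingSet,
    fun _ _ hQ hPQ => not_rePred_notMem_haltingSet
      (rePred_notMem_of_isomorphic_blockOrder hPQ hQ)⟩

end CEOrders
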